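/- Let n ≥ q ≥ 1 be integers. Then for ε > 0, ∫_ε^∞ sin(x)^n/x^q dx equals (1/(2i)^n) Σ_{k=0}^{⌊(n−1)/2⌋} (−1)^k C(n,k) [∫_ε^∞ (e^{i(n−2k)x} − P_{q−2}(i(n−2k)x))/x^q dx + (−1)^n ∫_ε^∞ (e^{−i(n−2k)x} − P_{q−2}(−i(n−2k)x))/x^q dx]. -/

import Mathlib

open Filter Finset Complex

/-- `P m z = ∑_{k=0}^{m-1} z^k/k!`; thus `P (m+1)` is the Maclaurin polynomial of `exp`
of order `m`, and `P 0 = 0` encodes the convention `P_{-1} = 0`. -/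
noncomputable def P (m : ℕ) (z : ℂ) : ℂ := ∑ k ∈ Finset.range m, z ^ k / (k.factorial : ℂ)

/-! Binomially, `(2i sin x)^n = ∑_{k ≤ n} (-1)^k C(n,k) e^{i(n-2k)x}`. Since
`∑_{k ≤ n} (-1)^k C(n,k) (n-2k)^j = 0` for `j < n` (an `n`-th forward difference of a polynomial
of degree `< n`), the Maclaurin polynomials `P_{q-2}(i(n-2k)x)` can be subtracted termwise for
free, and pairing `k` with `n - k` yields the stated sum plus the frequency-zero term `k = n/2`
of even `n`. That term is `1 - P_{q-2}(0)`, nonzero only for `q = 1`, and then its integral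
`∫_ε^R dx/x` diverges while all the others converge; so it cannot occur. -/
theorem neg_one_pow_sub {R : Type*} [Ring R] {n k : ℕ} (h : k ≤ n) :
    (-1 : R) ^ (n - k) = (-1) ^ n * (-1) ^ k := by
  rw [← pow_sub_mul_pow (-1 : R) h, mul_assoc, ← pow_add, Even.neg_one_pow ⟨k, rfl⟩, mul_one]

theorem Finset.sum_range_succ_eq_sum_add_reflect {M : Type*} [AddCommMonoid M] {n : ℕ}
    (hn : n ≠ 0) (g : ℕ → M) :
    ∑ k ∈ range (n + 1), g k
      = ∑ k ∈ range ((n - 1) / 2 + 1), (g k + g (n - k)) + if Even n then g (n / 2) else 0 := by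
  set m := (n - 1) / 2
  have hsplit : ∀ N, n = m + N → ∑ k ∈ range (n + 1), g k
      = ∑ k ∈ range (m + 1), g k + ∑ k ∈ range N, g (n - k) := by
    intro N hN
    rw [show n + 1 = (m + 1) + N by omega, sum_range_add, ← sum_range_reflect (fun k => g (n - k))]
    congr 1
    refine sum_congr rfl fun k hk => ?_
    have := mem_range.mp hk
    congr 1
    omega
  rw [sum_add_distrib]
  rcases Nat.even_or_odd n with hev | hodd
  · rw [hsplit (m + 2) (by obtain ⟨t, ht⟩ := hev; omega), sum_range_succ _ (m + 1), if_pos hev,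
      show n - (m + 1) = n / 2 by obtain ⟨t, ht⟩ := hev; omega, add_assoc]
  · rw [hsplit (m + 1) (by obtain ⟨t, ht⟩ := hodd; omega), if_neg (Nat.not_even_iff_odd.mpr hodd),
      add_zero]

open Polynomial in
theorem Polynomial.sum_range_neg_one_pow_mul_choose_mul_eval_eq_zero {R : Type*} [CommRing R]
    {n : ℕ} (p : R[X]) (hp : p.natDegree < n) :
    ∑ k ∈ range (n + 1), (-1 : R) ^ k * n.choose k * p.eval (k : R) = 0 := by
  have h := congrFun (p.fwdDiff_iter_eq_zero_of_degree_lt hp) 0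
  simp only [fwdDiff_iter_eq_sum_shift, zero_add, nsmul_eq_mul, mul_one, zsmul_eq_mul,
    Int.cast_mul, Int.cast_pow, Int.cast_neg, Int.cast_one, Int.cast_natCast, Pi.zero_apply] at h
  calc _ = (-1) ^ n * ∑ k ∈ range (n + 1), (-1 : R) ^ (n - k) * n.choose k * p.eval (k : R) := by
        rw [mul_sum]
        refine sum_congr rfl fun k hk => ?_
        have hsq : (-1 : R) ^ n * (-1) ^ n = 1 := by rw [← pow_add, Even.neg_one_pow ⟨n, rfl⟩]
        rw [neg_one_pow_sub (Nat.lt_succ_iff.mp (mem_range.mp hk))]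
        linear_combination (-((-1 : R) ^ k * n.choose k * p.eval (k : R))) * hsq
    _ = 0 := by rw [h, mul_zero]

open Polynomial in
theorem sum_range_neg_one_pow_mul_choose_mul_pow_eq_zero {R : Type*} [CommRing R] {n j : ℕ}
    (hj : j < n) (a b : R) :
    ∑ k ∈ range (n + 1), (-1 : R) ^ k * n.choose k * (a + b * k) ^ j = 0 := by
  have hdeg : ((C a + C b * X) ^ j).natDegree < n := lt_of_le_of_lt (by compute_degree) hj
  have := ((C a + C b * X) ^ j).sum_range_neg_one_pow_mul_choose_mul_eval_eq_zero hdeg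
  simp only [eval_pow, eval_add, eval_mul, eval_C, eval_X] at this
  exact this

theorem sum_range_neg_one_pow_mul_choose_mul_P_eq_zero {n m : ℕ} (hm : m ≤ n) (a b : ℂ) :
    ∑ k ∈ range (n + 1), (-1 : ℂ) ^ k * n.choose k * P m (a + b * k) = 0 := by
  simp only [P, mul_sum]
  rw [sum_comm]
  refine sum_eq_zero fun j hj => ?_
  simp only [← mul_div_assoc, ← sum_div]
  rw [sum_range_neg_one_pow_mul_choose_mul_pow_eq_zero (by have := mem_range.mp hj; omega),
    zero_div]

theorem two_mul_I_mul_sin_pow (n : ℕ) (z : ℂ) :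
    (2 * I * sin z) ^ n
      = ∑ k ∈ range (n + 1), (-1 : ℂ) ^ k * n.choose k * exp (I * ((n : ℂ) - 2 * k) * z) := by
  have h2I : 2 * I * sin z = -exp (-(I * z)) + exp (I * z) := by
    rw [show I * z = z * I by ring, show -(z * I) = -z * I by ring]
    linear_combination I * two_sin z + (exp (-z * I) - exp (z * I)) * I_sq
  rw [h2I, add_pow]
  refine sum_congr rfl fun k hk => ?_
  have hk : k ≤ n := Nat.lt_succ_iff.mp (mem_range.mp hk)
  have hexp : exp (-(I * z)) ^ k * exp (I * z) ^ (n - k) = exp (I * ((n : ℂ) - 2 * k) * z) := by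
    rw [← exp_nat_mul, ← exp_nat_mul, ← exp_add, Nat.cast_sub hk]
    ring_nf
  rw [neg_pow]
  linear_combination ((-1 : ℂ) ^ k * n.choose k) * hexp

/-- `expRemainder (q - 1) z = e^z - P_{q-2}(z)`. -/
noncomputable def expRemainder (m : ℕ) (z : ℂ) : ℂ := exp z - P m z

@[fun_prop]
theorem continuous_expRemainder (m : ℕ) : Continuous (expRemainder m) := by
  unfold expRemainder P; fun_prop

theorem expRemainder_zero_of_ne_zero {m : ℕ} (hm : m ≠ 0) : expRemainder m 0 = 0 := by
  obtain ⟨m, rfl⟩ := Nat.exists_eq_succ_of_ne_zero hm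
  simp [expRemainder, P, sum_range_succ']

theorem two_mul_I_mul_sin_pow_eq_sum_expRemainder {n m : ℕ} (hm : m ≤ n) (z : ℂ) :
    (2 * I * sin z) ^ n
      = ∑ k ∈ range (n + 1),
          (-1 : ℂ) ^ k * n.choose k * expRemainder m (I * ((n : ℂ) - 2 * k) * z) := by
  have hP :
      ∑ k ∈ range (n + 1), (-1 : ℂ) ^ k * n.choose k * P m (I * ((n : ℂ) - 2 * k) * z) = 0 := by
    rw [← sum_range_neg_one_pow_mul_choose_mul_P_eq_zero hm (I * n * z) (-2 * I * z)]
    refine sum_congr rfl fun k _ => ?_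
    ring_nf
  rw [two_mul_I_mul_sin_pow, ← sub_eq_zero, ← sum_sub_distrib, ← hP]
  exact sum_congr rfl fun k _ => by unfold expRemainder; ring

noncomputable def centralTerm (n m : ℕ) : ℂ :=
  if Even n then (-1) ^ (n / 2) * n.choose (n / 2) * expRemainder m 0 else 0

theorem two_mul_I_mul_sin_pow_eq_sum_add_centralTerm {n m : ℕ} (hn : n ≠ 0) (hm : m ≤ n)
    (z : ℂ) :
    (2 * I * sin z) ^ n
      = ∑ k ∈ range ((n - 1) / 2 + 1), (-1 : ℂ) ^ k * n.choose k *
          (expRemainder m (I * ((n : ℂ) - 2 * k) * z)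
            + (-1) ^ n * expRemainder m (-(I * ((n : ℂ) - 2 * k) * z)))
        + centralTerm n m := by
  rw [two_mul_I_mul_sin_pow_eq_sum_expRemainder hm, sum_range_succ_eq_sum_add_reflect hn,
    centralTerm]
  congr 1
  · refine sum_congr rfl fun k hk => ?_
    have hk : k ≤ n := by have := mem_range.mp hk; omega
    rw [neg_one_pow_sub hk, Nat.choose_symm hk, Nat.cast_sub hk]
    ring_nf
  · split_ifs with hev
    · obtain ⟨t, rfl⟩ := hev
      rw [show (t + t) / 2 = t by omega]
      push_cast
      ring_nf
    · rfl

theorem integral_sin_pow_div_pow_eq {n m : ℕ} (hn : n ≠ 0) (hm : m ≤ n) (q : ℕ) {ε R : ℝ}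
    (hε : 0 < ε) (hR : 0 < R) :
    (2 * I) ^ n * ∫ x in ε..R, (Real.sin x : ℂ) ^ n / (x : ℂ) ^ q
      = ∑ k ∈ range ((n - 1) / 2 + 1), (-1 : ℂ) ^ k * n.choose k *
          ((∫ x in ε..R, expRemainder m (I * ((n : ℂ) - 2 * k) * x) / (x : ℂ) ^ q)
            + (-1) ^ n * ∫ x in ε..R, expRemainder m (-(I * ((n : ℂ) - 2 * k) * x)) / (x : ℂ) ^ q)
        + centralTerm n m * ∫ x in ε..R, 1 / (x : ℂ) ^ q := by
  have hne : ∀ x ∈ Set.uIcc ε R, (x : ℂ) ^ q ≠ 0 := fun x hx =>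
    pow_ne_zero _ (ofReal_ne_zero.mpr (lt_of_lt_of_le (lt_min hε hR) hx.1).ne')
  have hpt : ∀ x : ℝ, (2 * I) ^ n * ((Real.sin x : ℂ) ^ n / (x : ℂ) ^ q)
      = ∑ k ∈ range ((n - 1) / 2 + 1), (-1 : ℂ) ^ k * n.choose k *
          (expRemainder m (I * ((n : ℂ) - 2 * k) * x) / (x : ℂ) ^ q
            + (-1) ^ n * (expRemainder m (-(I * ((n : ℂ) - 2 * k) * x)) / (x : ℂ) ^ q))
        + centralTerm n m * (1 / (x : ℂ) ^ q) := by
    intro x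
    rw [← mul_div_assoc, ← mul_pow, ofReal_sin,
      two_mul_I_mul_sin_pow_eq_sum_add_centralTerm hn hm, add_div, sum_div]
    congr 1
    · exact sum_congr rfl fun k _ => by ring
    · ring
  rw [← intervalIntegral.integral_const_mul]
  simp only [hpt]
  rw [intervalIntegral.integral_add
      (ContinuousOn.intervalIntegrable (by fun_prop (disch := exact hne)))
      (ContinuousOn.intervalIntegrable (by fun_prop (disch := exact hne))),
    intervalIntegral.integral_finsetSum fun k _ =>
      ContinuousOn.intervalIntegrable (by fun_prop (disch := exact hne)),
    intervalIntegral.integral_const_mul]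
  congr 1
  refine sum_congr rfl fun k _ => ?_
  rw [intervalIntegral.integral_const_mul, intervalIntegral.integral_add
      (ContinuousOn.intervalIntegrable (by fun_prop (disch := exact hne)))
      (ContinuousOn.intervalIntegrable (by fun_prop (disch := exact hne))),
    intervalIntegral.integral_const_mul]

theorem not_tendsto_integral_one_div {ε : ℝ} (hε : 0 < ε) (l : ℂ) :
    ¬ Tendsto (fun R : ℝ => ∫ x in ε..R, 1 / (x : ℂ)) atTop (nhds l) := by
  intro h
  have hlog : (fun R : ℝ => (∫ x in ε..R, 1 / (x : ℂ)).re) =ᶠ[atTop] fun R => Real.log (R / ε) := by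
    filter_upwards [eventually_gt_atTop 0] with R hR
    simp only [one_div, ← ofReal_inv, intervalIntegral.integral_ofReal, integral_inv_of_pos hε hR,
      ofReal_re]
  exact not_tendsto_nhds_of_tendsto_atTop
    (Real.tendsto_log_atTop.comp (tendsto_id.atTop_div_const hε)) _
    (((continuous_re.tendsto l).comp h).congr' hlog)

theorem centralTerm_eq_zero_of_tendsto {n q : ℕ} (hq : 1 ≤ q) {ε : ℝ} (hε : 0 < ε) {l : ℂ}
    (h : Tendsto (fun R : ℝ => centralTerm n (q - 1) * ∫ x in ε..R, 1 / (x : ℂ) ^ q) atTop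
      (nhds l)) :
    centralTerm n (q - 1) = 0 := by
  by_contra hc
  obtain rfl : q = 1 := by
    by_contra hq1
    exact hc (by simp [centralTerm, expRemainder_zero_of_ne_zero (by omega : q - 1 ≠ 0)])
  refine not_tendsto_integral_one_div hε _ ((h.const_mul (centralTerm n 0)⁻¹).congr fun R => ?_)
  simp only [pow_one, inv_mul_cancel_left₀ hc]

/-- Decomposition of `∫_ε^∞ sin(x)^n/x^q dx`: if `L` is this improper integral and for each
`k ≤ ⌊(n-1)/2⌋`, `A k = ∫_ε^∞ (e^{i(n-2k)x} − P_{q-2}(i(n-2k)x))/x^q dx` and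
`B k = ∫_ε^∞ (e^{-i(n-2k)x} − P_{q-2}(-i(n-2k)x))/x^q dx`, then
`L = (1/(2i)^n) ∑_k (-1)^k C(n,k) (A k + (-1)^n B k)`. -/
theorem integral_decomposition (n q : ℕ) (hq : 1 ≤ q) (hnq : q ≤ n) (ε : ℝ) (hε : 0 < ε)
    (L : ℂ) (A B : ℕ → ℂ)
    (hL : Tendsto (fun R : ℝ => ∫ x in ε..R, ((Real.sin x : ℂ)) ^ n / (x : ℂ) ^ q)
      atTop (nhds L))
    (hA : ∀ k ∈ Finset.range ((n - 1) / 2 + 1),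
      Tendsto (fun R : ℝ => ∫ x in ε..R,
          (Complex.exp (Complex.I * ((n : ℂ) - 2 * k) * x)
            - P (q - 1) (Complex.I * ((n : ℂ) - 2 * k) * x)) / (x : ℂ) ^ q)
        atTop (nhds (A k)))
    (hB : ∀ k ∈ Finset.range ((n - 1) / 2 + 1),
      Tendsto (fun R : ℝ => ∫ x in ε..R,
          (Complex.exp (-(Complex.I * ((n : ℂ) - 2 * k) * x))
            - P (q - 1) (-(Complex.I * ((n : ℂ) - 2 * k) * x))) / (x : ℂ) ^ q)
        atTop (nhds (B k))) :
    L = (1 / (2 * Complex.I) ^ n) *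
        ∑ k ∈ Finset.range ((n - 1) / 2 + 1),
          (-1 : ℂ) ^ k * (n.choose k : ℂ) * (A k + (-1 : ℂ) ^ n * B k) := by
  have hn : n ≠ 0 := by omega
  set S := ∑ k ∈ range ((n - 1) / 2 + 1), (-1 : ℂ) ^ k * n.choose k * (A k + (-1) ^ n * B k)
  have hS : Tendsto (fun R : ℝ => ∑ k ∈ range ((n - 1) / 2 + 1), (-1 : ℂ) ^ k * n.choose k *
      ((∫ x in ε..R, expRemainder (q - 1) (I * ((n : ℂ) - 2 * k) * x) / (x : ℂ) ^ q)
        + (-1) ^ n *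
          ∫ x in ε..R, expRemainder (q - 1) (-(I * ((n : ℂ) - 2 * k) * x)) / (x : ℂ) ^ q))
      atTop (nhds S) :=
    tendsto_finsetSum _ fun k hk => ((hA k hk).add ((hB k hk).const_mul _)).const_mul _
  have hcentral : Tendsto (fun R : ℝ => centralTerm n (q - 1) * ∫ x in ε..R, 1 / (x : ℂ) ^ q)
      atTop (nhds ((2 * I) ^ n * L - S)) := by
    refine ((hL.const_mul _).sub hS).congr' ?_
    filter_upwards [eventually_gt_atTop 0] with R hR
    rw [integral_sin_pow_div_pow_eq (m := q - 1) hn (by omega) q hε hR]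
    ring
  have hLS : (2 * I) ^ n * L - S = 0 := by
    refine tendsto_nhds_unique hcentral ?_
    simp only [centralTerm_eq_zero_of_tendsto hq hε hcentral, zero_mul, tendsto_const_nhds]
  rw [← sub_eq_zero.mp hLS]
  field_simp
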